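/- For all sufficiently large integers k, the unique root of Δ_k(z) in the open complex disk |z| < 1/√(8+8k) is a simple real root lying in the open real interval (0, 1/√(8+8k)). -/

import Mathlib

/-!
Write `s = √(8 + 8k)`, `r = 1 / s` and `Δ_k = p_k + g` with `g = 4 C_k z^{2k+1} h_k`. Since
`C_k r^{2k} ≤ 4^{-k}`, the perturbation `g` is tiny on the closed disk of radius `r`, and so is its
Lipschitz constant there. The quadratic `p_k = -(s² - 1)(z - a)(z + 1/(s - 1))` has the root
`a = 1/(s + 1)` inside the disk and its other root well outside, so every root of `Δ_k` in the disk
lies very close to `a`. Near `a` the divided differences of `p_k` have size about `|p_k'(a)| = 2s`,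
which beats the Lipschitz constant of `g`: hence `Δ_k` has at most one root in the disk and `Δ_k'`
does not vanish at it. A real root in `(0, r)` exists by the intermediate value theorem, since
`Δ_k(0) = 1` and `Δ_k(r) ≈ r² - 2r < 0`.
-/

open Filter Polynomial

/-- `C_k = (2k-2)!/(k-1)!` as a complex number. -/
noncomputable def CcC (k : ℕ) : ℂ :=
  ((2 * k - 2).factorial : ℂ) / ((k - 1).factorial : ℂ)

/-- The polynomial `p_k(z) = 1 − 2z − (7+8k)z²` over `ℂ`. -/
noncomputable def Ppoly (k : ℕ) : Polynomial ℂ :=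
  Polynomial.C 1 - Polynomial.C 2 * Polynomial.X
    - Polynomial.C (7 + 8 * (k : ℂ)) * Polynomial.X ^ 2

/-- The polynomial `h_k(z) = 1 − z − C_k·z^{2k+1}` over `ℂ`. -/
noncomputable def Hpoly (k : ℕ) : Polynomial ℂ :=
  Polynomial.C 1 - Polynomial.X - Polynomial.C (CcC k) * Polynomial.X ^ (2 * k + 1)

/-- The polynomial `Δ_k(z) = p_k(z) + 4·C_k·z^{2k+1}·h_k(z)` over `ℂ`. -/
noncomputable def Dpoly (k : ℕ) : Polynomial ℂ :=
  Ppoly k + Polynomial.C (4 * CcC k) * Polynomial.X ^ (2 * k + 1) * Hpoly k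

/-- `Ppoly k` is `baseQuad (7 + 8 * k)` and `Dpoly k` is
`baseQuad (7 + 8 * k) + perturbation (CcC k) (2 * k + 1)`, both definitionally. -/
noncomputable def baseQuad {R : Type*} [CommRing R] (A : R) : R[X] :=
  C 1 - C 2 * X - C A * X ^ 2

noncomputable def perturbation {R : Type*} [CommRing R] (c : R) (n : ℕ) : R[X] :=
  C (4 * c) * X ^ n * (C 1 - X - C c * X ^ n)

section CommRing

variable {R : Type*} [CommRing R]

@[simp]
lemma eval_baseQuad (A w : R) : (baseQuad A).eval w = 1 - 2 * w - A * w ^ 2 := by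
  simp [baseQuad]

@[simp]
lemma eval_perturbation (c w : R) (n : ℕ) :
    (perturbation c n).eval w = 4 * c * w ^ n * (1 - w - c * w ^ n) := by
  simp [perturbation]

lemma eval_baseQuad_sub_eval_baseQuad (A z x : R) :
    (baseQuad A).eval z - (baseQuad A).eval x = -((z - x) * (2 + A * (z + x))) := by
  simp only [eval_baseQuad]; ring

lemma eval_derivative_baseQuad (A x : R) :
    (baseQuad A).derivative.eval x = -(2 + A * (x + x)) := by
  simp [baseQuad]; ring

end CommRing

lemma norm_pow_succ_sub_pow_succ_le {R : Type*} [SeminormedRing R] {z x : R} {r : ℝ}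
    (hz : ‖z‖ ≤ r) (hx : ‖x‖ ≤ r) (n : ℕ) :
    ‖z ^ (n + 1) - x ^ (n + 1)‖ ≤ (n + 1) * r ^ n * ‖z - x‖ := by
  induction n with
  | zero => simp
  | succ n ih =>
    have hr : 0 ≤ r := (norm_nonneg z).trans hz
    have hzn : ‖z ^ (n + 1)‖ ≤ r ^ (n + 1) :=
      (norm_pow_le' z n.succ_pos).trans (pow_le_pow_left₀ (norm_nonneg z) hz _)
    calc ‖z ^ (n + 2) - x ^ (n + 2)‖
        = ‖z ^ (n + 1) * (z - x) + (z ^ (n + 1) - x ^ (n + 1)) * x‖ := by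
          congr 1; noncomm_ring
      _ ≤ r ^ (n + 1) * ‖z - x‖ + (n + 1) * r ^ n * ‖z - x‖ * r := by
          refine (norm_add_le _ _).trans (add_le_add ?_ ?_)
          · exact (norm_mul_le _ _).trans (by gcongr)
          · exact (norm_mul_le _ _).trans (by gcongr)
      _ = (↑(n + 1) + 1) * r ^ (n + 1) * ‖z - x‖ := by push_cast; ring

def perturbationBound (c r : ℝ) (n : ℕ) : ℝ := 4 * c * r ^ n * (1 + r + c * r ^ n)

def perturbationLipschitz (c r : ℝ) (m : ℕ) : ℝ :=
  4 * c * ((m + 1) * r ^ m + (m + 2) * r ^ (m + 1) + (2 * m + 2) * c * r ^ (2 * m + 1))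

section RCLike

variable {𝕜 : Type*} [RCLike 𝕜] {c : 𝕜} {r : ℝ}

lemma norm_eval_perturbation_le {w : 𝕜} (hw : ‖w‖ ≤ r) (n : ℕ) :
    ‖(perturbation c n).eval w‖ ≤ perturbationBound ‖c‖ r n := by
  have hwn : ‖w ^ n‖ ≤ r ^ n := by
    rw [norm_pow]; exact pow_le_pow_left₀ (norm_nonneg w) hw n
  have hh : ‖1 - w - c * w ^ n‖ ≤ 1 + r + ‖c‖ * r ^ n := by
    calc ‖1 - w - c * w ^ n‖ ≤ ‖(1 : 𝕜)‖ + ‖w‖ + ‖c‖ * ‖w ^ n‖ := by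
          refine (norm_sub_le _ _).trans (add_le_add (norm_sub_le _ _) (norm_mul_le _ _))
      _ ≤ 1 + r + ‖c‖ * r ^ n := by rw [norm_one]; gcongr
  rw [eval_perturbation, norm_mul, norm_mul, norm_mul, RCLike.norm_ofNat, perturbationBound]
  have hr : 0 ≤ r := (norm_nonneg w).trans hw
  gcongr

lemma norm_eval_perturbation_sub_le {z x : 𝕜} (hz : ‖z‖ ≤ r) (hx : ‖x‖ ≤ r) (m : ℕ) :
    ‖(perturbation c (m + 1)).eval z - (perturbation c (m + 1)).eval x‖ ≤
      perturbationLipschitz ‖c‖ r m * ‖z - x‖ := by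
  have h1 := norm_pow_succ_sub_pow_succ_le hz hx m
  have h2 := norm_pow_succ_sub_pow_succ_le hz hx (m + 1)
  have h3 := norm_pow_succ_sub_pow_succ_le hz hx (2 * m + 1)
  have hdiff : (perturbation c (m + 1)).eval z - (perturbation c (m + 1)).eval x =
      4 * c * ((z ^ (m + 1) - x ^ (m + 1)) - (z ^ (m + 2) - x ^ (m + 2))
        - c * (z ^ (2 * m + 2) - x ^ (2 * m + 2))) := by
    simp only [eval_perturbation]; ring
  rw [hdiff, norm_mul, norm_mul, RCLike.norm_ofNat, perturbationLipschitz]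
  calc 4 * ‖c‖ * ‖(z ^ (m + 1) - x ^ (m + 1)) - (z ^ (m + 2) - x ^ (m + 2))
        - c * (z ^ (2 * m + 2) - x ^ (2 * m + 2))‖
      ≤ 4 * ‖c‖ * (‖z ^ (m + 1) - x ^ (m + 1)‖ + ‖z ^ (m + 2) - x ^ (m + 2)‖
        + ‖c‖ * ‖z ^ (2 * m + 2) - x ^ (2 * m + 2)‖) := by
        gcongr
        refine (norm_sub_le _ _).trans (add_le_add (norm_sub_le _ _) (norm_mul_le _ _))
    _ ≤ 4 * ‖c‖ * ((m + 1) * r ^ m * ‖z - x‖ + (↑(m + 1) + 1) * r ^ (m + 1) * ‖z - x‖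
        + ‖c‖ * ((↑(2 * m + 1) + 1) * r ^ (2 * m + 1) * ‖z - x‖)) := by gcongr
    _ = _ := by push_cast; ring

end RCLike

lemma norm_eval_derivative_le_of_lipschitz {𝕜 : Type*} [NontriviallyNormedField 𝕜] {P : 𝕜[X]}
    {x : 𝕜} {r L : ℝ} (hx : ‖x‖ < r) (hL : 0 ≤ L)
    (hP : ∀ z, ‖z‖ ≤ r → ‖P.eval z - P.eval x‖ ≤ L * ‖z - x‖) :
    ‖P.derivative.eval x‖ ≤ L := by
  refine (P.hasDerivAt x).le_of_lip' hL ?_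
  filter_upwards [Metric.isOpen_ball.mem_nhds (mem_ball_zero_iff.2 hx)] with z hz
  exact hP z (mem_ball_zero_iff.1 hz).le

section Quadratic

variable {s : ℝ}

lemma sq_sub_one_mul_inv_add_one (hs : 1 < s) :
    ((s ^ 2 - 1 : ℝ) : ℂ) * (((s + 1)⁻¹ : ℝ) : ℂ) = s - 1 := by
  have : (s : ℂ) + 1 ≠ 0 := by exact_mod_cast (by linarith : s + 1 ≠ 0)
  push_cast; field_simp; ring

lemma norm_sub_le_norm_eval_baseQuad (hs : 1 < s) {w : ℂ} (hw : ‖w‖ ≤ 1 / s) :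
    ‖w - (((s + 1)⁻¹ : ℝ) : ℂ)‖ ≤ ‖(baseQuad ((s ^ 2 - 1 : ℝ) : ℂ)).eval w‖ := by
  have hroot : (baseQuad ((s ^ 2 - 1 : ℝ) : ℂ)).eval (((s + 1)⁻¹ : ℝ) : ℂ) = 0 := by
    have : (s : ℂ) + 1 ≠ 0 := by exact_mod_cast (by linarith : s + 1 ≠ 0)
    simp only [eval_baseQuad]; push_cast; field_simp; ring
  have hfactor : (baseQuad ((s ^ 2 - 1 : ℝ) : ℂ)).eval w =
      -((w - (((s + 1)⁻¹ : ℝ) : ℂ)) * ((s + 1 : ℝ) + ((s ^ 2 - 1 : ℝ) : ℂ) * w)) := by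
    rw [← sub_zero ((baseQuad _).eval w), ← hroot, eval_baseQuad_sub_eval_baseQuad,
      mul_add _ w, sq_sub_one_mul_inv_add_one hs]
    push_cast; ring
  have hA : ‖((s ^ 2 - 1 : ℝ) : ℂ) * w‖ ≤ s - 1 / s := by
    rw [norm_mul, Complex.norm_real, Real.norm_of_nonneg (by nlinarith)]
    calc (s ^ 2 - 1) * ‖w‖ ≤ (s ^ 2 - 1) * (1 / s) := by gcongr; nlinarith
      _ = s - 1 / s := by field_simp
  have hfar : 1 ≤ ‖((s + 1 : ℝ) : ℂ) + ((s ^ 2 - 1 : ℝ) : ℂ) * w‖ := by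
    have := norm_sub_norm_le ((s + 1 : ℝ) : ℂ) (-(((s ^ 2 - 1 : ℝ) : ℂ) * w))
    rw [Complex.norm_real, Real.norm_of_nonneg (by linarith), norm_neg, sub_neg_eq_add] at this
    have : 0 < 1 / s := by positivity
    linarith
  rw [hfactor, norm_neg, norm_mul]
  exact le_mul_of_one_le_right (norm_nonneg _) hfar

lemma two_mul_sub_le_norm_two_add_mul_add (hs : 1 < s) (z x : ℂ) :
    2 * s - (s ^ 2 - 1) * (‖z - (((s + 1)⁻¹ : ℝ) : ℂ)‖ + ‖x - (((s + 1)⁻¹ : ℝ) : ℂ)‖) ≤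
      ‖2 + ((s ^ 2 - 1 : ℝ) : ℂ) * (z + x)‖ := by
  have hsplit : 2 + ((s ^ 2 - 1 : ℝ) : ℂ) * (z + x) =
      ((2 * s : ℝ) : ℂ) + ((s ^ 2 - 1 : ℝ) : ℂ) *
        ((z - (((s + 1)⁻¹ : ℝ) : ℂ)) + (x - (((s + 1)⁻¹ : ℝ) : ℂ))) := by
    have h := sq_sub_one_mul_inv_add_one hs
    push_cast at h ⊢
    linear_combination 2 * h
  set a : ℂ := (((s + 1)⁻¹ : ℝ) : ℂ)
  have hnorm : ‖((s ^ 2 - 1 : ℝ) : ℂ) * ((z - a) + (x - a))‖ ≤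
      (s ^ 2 - 1) * (‖z - a‖ + ‖x - a‖) := by
    rw [norm_mul, Complex.norm_real, Real.norm_of_nonneg (by nlinarith)]
    gcongr
    · nlinarith
    · exact norm_add_le _ _
  have := norm_sub_norm_le ((2 * s : ℝ) : ℂ) (-(((s ^ 2 - 1 : ℝ) : ℂ) * ((z - a) + (x - a))))
  rw [Complex.norm_real, Real.norm_of_nonneg (by linarith), norm_neg, sub_neg_eq_add,
    ← hsplit] at this
  linarith

end Quadratic

lemma perturbation_estimates_of_small {s c : ℝ} {m : ℕ} (hs : 2 ≤ s) (hc : 0 ≤ c)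
    (hsmall : 16 * (m + 1) * (c * (1 / s) ^ m) ≤ 1) :
    perturbationBound c (1 / s) (m + 1) < 1 / s * (2 - 1 / s) ∧
      perturbationLipschitz c (1 / s) m + 2 * (s ^ 2 - 1) * perturbationBound c (1 / s) (m + 1)
        < 2 * s := by
  set r := 1 / s with hr
  set ε := c * r ^ m with hε
  have hrs : r * s = 1 := by rw [hr]; field_simp
  have hr0 : 0 < r := by positivity
  have hr2 : r ≤ 1 / 2 := by rw [hr]; gcongr
  have hε0 : 0 ≤ ε := by positivity
  have hεm : (m + 1) * ε ≤ 1 / 16 := by linarith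
  have hε1 : ε ≤ 1 / 16 := by nlinarith
  have hδ : perturbationBound c r (m + 1) = 4 * ε * r * (1 + r + ε * r) := by
    rw [perturbationBound, hε]; ring
  have hδ' : perturbationBound c r (m + 1) ≤ 7 * ε * r := by
    rw [hδ]; nlinarith [mul_nonneg hε0 hr0.le, mul_nonneg (mul_nonneg hε0 hr0.le) hr0.le]
  have hL : perturbationLipschitz c r m =
      4 * ((m + 1) * ε) + 4 * ε * ((m + 2) * r) + 4 * ((2 * m + 2) * ε) * (ε * r) := by
    rw [perturbationLipschitz, hε]; ring
  have hmr : (m + 2) * r ≤ m + 1 := by nlinarith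
  constructor
  · nlinarith
  · have h1 : perturbationLipschitz c r m ≤ 1 := by
      rw [hL]; nlinarith [mul_nonneg hε0 hr0.le]
    have h2 : (s ^ 2 - 1) * perturbationBound c r (m + 1) ≤ 7 * ε * s := by
      have hδ0 : 0 ≤ perturbationBound c r (m + 1) := by rw [hδ]; positivity
      calc (s ^ 2 - 1) * perturbationBound c r (m + 1)
          ≤ s ^ 2 * (7 * ε * r) := by gcongr; linarith
        _ = 7 * ε * s := by linear_combination 7 * ε * s * hrs
    nlinarith

lemma exists_isRoot_ofReal_mem_Ioo {s c : ℝ} {n : ℕ} (hs : 0 < s) (hn : n ≠ 0)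
    (hδ : perturbationBound ‖c‖ (1 / s) n < 1 / s * (2 - 1 / s)) :
    ∃ x ∈ Set.Ioo 0 (1 / s),
      (baseQuad ((s ^ 2 - 1 : ℝ) : ℂ) + perturbation (c : ℂ) n).IsRoot (x : ℂ) := by
  set Q := baseQuad (s ^ 2 - 1) + perturbation c n
  have hr : 0 < 1 / s := by positivity
  have hQ0 : Q.eval 0 = 1 := by simp [Q, zero_pow hn]
  have hQr : Q.eval (1 / s) < 0 := by
    have hpert := norm_eval_perturbation_le (c := c) (le_of_eq (Real.norm_of_nonneg hr.le)) n
    rw [Real.norm_eq_abs] at hpert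
    have hquad : (baseQuad (s ^ 2 - 1)).eval (1 / s) = (1 / s) ^ 2 - 2 * (1 / s) := by
      rw [eval_baseQuad]; field_simp; ring
    simp only [Q, eval_add, hquad]
    nlinarith [le_abs_self ((perturbation c n).eval (1 / s))]
  obtain ⟨x, hx, hQx⟩ := intermediate_value_Ioo' hr.le Q.continuous.continuousOn
    (show (0 : ℝ) ∈ Set.Ioo (Q.eval (1 / s)) (Q.eval 0) by rw [hQ0]; exact ⟨hQr, one_pos⟩)
  refine ⟨x, hx, ?_⟩
  have hcast : (baseQuad ((s ^ 2 - 1 : ℝ) : ℂ) + perturbation (c : ℂ) n).eval (x : ℂ) =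
      (Q.eval x : ℝ) := by
    simp [Q]
  rw [IsRoot.def, hcast]
  exact_mod_cast hQx

lemma rootMultiplicity_eq_one_of_not_isRoot_derivative {R : Type*} [CommRing R] {p : R[X]}
    {t : R} (hp : p.IsRoot t) (hp' : ¬ p.derivative.IsRoot t) : p.rootMultiplicity t = 1 := by
  have hp0 : p ≠ 0 := by rintro rfl; simp at hp'
  have hpos := (rootMultiplicity_pos hp0).2 hp
  have hle : ¬ 1 < p.rootMultiplicity t := fun h =>
    hp' ((one_lt_rootMultiplicity_iff_isRoot hp0).1 h).2
  omega

lemma norm_sub_inv_add_one_le_of_isRoot {s : ℝ} (hs : 1 < s) {γ w : ℂ} {n : ℕ}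
    (hw : ‖w‖ ≤ 1 / s) (hroot : (baseQuad ((s ^ 2 - 1 : ℝ) : ℂ) + perturbation γ n).IsRoot w) :
    ‖w - (((s + 1)⁻¹ : ℝ) : ℂ)‖ ≤ perturbationBound ‖γ‖ (1 / s) n := by
  rw [IsRoot.def, eval_add] at hroot
  calc _ ≤ ‖(baseQuad ((s ^ 2 - 1 : ℝ) : ℂ)).eval w‖ := norm_sub_le_norm_eval_baseQuad hs hw
    _ = ‖(perturbation γ n).eval w‖ := by rw [eq_neg_of_add_eq_zero_left hroot, norm_neg]
    _ ≤ _ := norm_eval_perturbation_le hw n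

lemma perturbationLipschitz_lt_norm_of_isRoot {s c : ℝ} {m : ℕ} (hs : 1 < s) (hc : 0 ≤ c)
    (hL : perturbationLipschitz c (1 / s) m + 2 * (s ^ 2 - 1) * perturbationBound c (1 / s) (m + 1)
      < 2 * s)
    {z w : ℂ} (hz : ‖z‖ ≤ 1 / s) (hw : ‖w‖ ≤ 1 / s)
    (hz0 : (baseQuad ((s ^ 2 - 1 : ℝ) : ℂ) + perturbation (c : ℂ) (m + 1)).IsRoot z)
    (hw0 : (baseQuad ((s ^ 2 - 1 : ℝ) : ℂ) + perturbation (c : ℂ) (m + 1)).IsRoot w) :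
    perturbationLipschitz c (1 / s) m < ‖2 + ((s ^ 2 - 1 : ℝ) : ℂ) * (z + w)‖ := by
  have hcn : ‖(c : ℂ)‖ = c := by rw [Complex.norm_real, Real.norm_of_nonneg hc]
  have hzw := add_le_add (norm_sub_inv_add_one_le_of_isRoot hs hz hz0)
    (norm_sub_inv_add_one_le_of_isRoot hs hw hw0)
  rw [hcn] at hzw
  have := mul_le_mul_of_nonneg_left hzw (by nlinarith : 0 ≤ s ^ 2 - 1)
  have := two_mul_sub_le_norm_two_add_mul_add hs z w
  linarith

theorem exists_unique_simple_root_baseQuad_add_perturbation {s c : ℝ} {m : ℕ} (hs : 2 ≤ s)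
    (hc : 0 ≤ c) (hsmall : 16 * (m + 1) * (c * (1 / s) ^ m) ≤ 1) :
    ∃ x : ℝ, x ∈ Set.Ioo 0 (1 / s) ∧
      (baseQuad ((s ^ 2 - 1 : ℝ) : ℂ) + perturbation (c : ℂ) (m + 1)).IsRoot (x : ℂ) ∧
      (baseQuad ((s ^ 2 - 1 : ℝ) : ℂ) + perturbation (c : ℂ) (m + 1)).rootMultiplicity (x : ℂ)
        = 1 ∧
      ∀ z : ℂ, ‖z‖ < 1 / s →
        (baseQuad ((s ^ 2 - 1 : ℝ) : ℂ) + perturbation (c : ℂ) (m + 1)).IsRoot z →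
          z = (x : ℂ) := by
  set A : ℂ := ((s ^ 2 - 1 : ℝ) : ℂ)
  set G := perturbation (c : ℂ) (m + 1)
  set L := perturbationLipschitz c (1 / s) m
  obtain ⟨hδ, hL⟩ := perturbation_estimates_of_small hs hc hsmall
  obtain ⟨x, hx, hroot⟩ := exists_isRoot_ofReal_mem_Ioo (s := s) (c := c) (n := m + 1) (by linarith)
    m.succ_ne_zero (by rwa [Real.norm_of_nonneg hc])
  have hxr : ‖(x : ℂ)‖ < 1 / s := by
    rw [Complex.norm_real, Real.norm_of_nonneg hx.1.le]; exact hx.2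
  have hlip : ∀ z w : ℂ, ‖z‖ ≤ 1 / s → ‖w‖ ≤ 1 / s → ‖G.eval z - G.eval w‖ ≤ L * ‖z - w‖ :=
    fun z w hz hw => by
      simpa only [Complex.norm_real, Real.norm_of_nonneg hc] using
        norm_eval_perturbation_sub_le (c := (c : ℂ)) hz hw m
  refine ⟨x, hx, hroot, rootMultiplicity_eq_one_of_not_isRoot_derivative hroot fun hx' => ?_, ?_⟩
  · have hder : ‖G.derivative.eval (x : ℂ)‖ ≤ L :=
      norm_eval_derivative_le_of_lipschitz hxr (by unfold L perturbationLipschitz; positivity)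
        fun z hz => hlip z x hz hxr.le
    rw [IsRoot.def, derivative_add, eval_add, eval_derivative_baseQuad, neg_add_eq_zero] at hx'
    exact (perturbationLipschitz_lt_norm_of_isRoot (by linarith) hc hL hxr.le hxr.le hroot
      hroot).not_ge (hx' ▸ hder)
  · intro z hz hz0
    by_contra hzx
    have hdiff : (z - x) * (2 + A * (z + x)) = G.eval z - G.eval (x : ℂ) := by
      have h := eval_baseQuad_sub_eval_baseQuad A z x
      rw [IsRoot.def, eval_add] at hz0 hroot
      linear_combination h - hz0 + hroot
    have hle := hlip z x hz.le hxr.le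
    rw [← hdiff, norm_mul, mul_comm] at hle
    exact (perturbationLipschitz_lt_norm_of_isRoot (by linarith) hc hL hz.le hxr.le hz0
      hroot).not_ge (le_of_mul_le_mul_right hle (norm_pos_iff.2 (sub_ne_zero.2 hzx)))

lemma CcC_eq_descFactorial (k : ℕ) : CcC k = (((2 * k - 2).descFactorial (k - 1) : ℝ) : ℂ) := by
  have h := Nat.factorial_mul_descFactorial (show k - 1 ≤ 2 * k - 2 by omega)
  rw [show 2 * k - 2 - (k - 1) = k - 1 by omega] at h
  rw [CcC, ← h]
  push_cast
  exact mul_div_cancel_left₀ _ (by exact_mod_cast (k - 1).factorial_ne_zero)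

lemma descFactorial_mul_inv_sqrt_pow_le (k : ℕ) :
    ((2 * k - 2).descFactorial (k - 1) : ℝ) * (1 / √(8 + 8 * k)) ^ (2 * k) ≤ (1 / 4) ^ k := by
  have hnat : (2 * k - 2).descFactorial (k - 1) ≤ (2 * k + 2) ^ k :=
    calc (2 * k - 2).descFactorial (k - 1) ≤ (2 * k - 2) ^ (k - 1) := Nat.descFactorial_le_pow _ _
      _ ≤ (2 * k + 2) ^ (k - 1) := Nat.pow_le_pow_left (by omega) _
      _ ≤ (2 * k + 2) ^ k := Nat.pow_le_pow_right (by omega) (by omega)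
  have hsq : (1 / √(8 + 8 * (k : ℝ))) ^ (2 * k) = (1 / (8 + 8 * k)) ^ k := by
    rw [pow_mul, div_pow, Real.sq_sqrt (by positivity), one_pow]
  calc ((2 * k - 2).descFactorial (k - 1) : ℝ) * (1 / √(8 + 8 * k)) ^ (2 * k)
      ≤ (2 * k + 2 : ℝ) ^ k * (1 / (8 + 8 * k)) ^ k := by
        rw [hsq]; gcongr; exact_mod_cast hnat
    _ = (1 / 4) ^ k := by
        rw [← mul_pow]; congr 1; field_simp; ring

lemma sixteen_mul_two_mul_add_one_le_four_pow {k : ℕ} (hk : 4 ≤ k) :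
    16 * (2 * k + 1) ≤ 4 ^ k := by
  induction k, hk using Nat.le_induction with
  | base => norm_num
  | succ k _ ih => rw [pow_succ]; omega

lemma sixteen_mul_descFactorial_mul_pow_le_one {k : ℕ} (hk : 4 ≤ k) :
    16 * (((2 * k : ℕ) : ℝ) + 1) *
      (((2 * k - 2).descFactorial (k - 1) : ℝ) * (1 / √(8 + 8 * k)) ^ (2 * k)) ≤ 1 := by
  have h4 : (16 * (2 * k + 1) : ℝ) ≤ 4 ^ k := by
    exact_mod_cast sixteen_mul_two_mul_add_one_le_four_pow hk
  calc _ ≤ 16 * (((2 * k : ℕ) : ℝ) + 1) * (1 / 4) ^ k := by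
        gcongr; exact descFactorial_mul_inv_sqrt_pow_le k
    _ ≤ 1 := by
        rw [div_pow, one_pow, mul_one_div, div_le_one (by positivity)]; push_cast; linarith

/-- For all sufficiently large integers `k`, the unique root of `Δ_k(z)` in
the open complex disk `|z| < 1/√(8+8k)` is a simple real root lying in the open real interval
`(0, 1/√(8+8k))`. -/
theorem statement6 :
    ∀ᶠ k : ℕ in Filter.atTop,
      ∃ x : ℝ, x ∈ Set.Ioo (0 : ℝ) (1 / Real.sqrt (8 + 8 * k)) ∧
        (Dpoly k).IsRoot (x : ℂ) ∧
        (Dpoly k).rootMultiplicity (x : ℂ) = 1 ∧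
        ∀ z : ℂ, ‖z‖ < 1 / Real.sqrt (8 + 8 * k) →
          (Dpoly k).IsRoot z → z = (x : ℂ) := by
  filter_upwards [eventually_ge_atTop 4] with k hk
  have hs : 2 ≤ √(8 + 8 * (k : ℝ)) :=
    Real.le_sqrt_of_sq_le (by linarith [(Nat.cast_nonneg k : (0 : ℝ) ≤ k)])
  have hD : Dpoly k = baseQuad ((√(8 + 8 * (k : ℝ)) ^ 2 - 1 : ℝ) : ℂ) +
      perturbation (((2 * k - 2).descFactorial (k - 1) : ℝ) : ℂ) (2 * k + 1) := by
    rw [Real.sq_sqrt (by positivity), ← CcC_eq_descFactorial]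
    show baseQuad _ + perturbation _ _ = _
    congr 2
    push_cast
    ring
  rw [hD]
  exact exists_unique_simple_root_baseQuad_add_perturbation hs (Nat.cast_nonneg _)
    (sixteen_mul_descFactorial_mul_pow_le_one hk)
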